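/- The map sending a permutation σ ∈ S_n with minimum Ulam distance d code C to the subsequence of its one-line notation consisting of the symbols 1, 2, ..., n−d+1 (in the order they appear) is injective on C; consequently |C| ≤ (n−d+1)!. -/

import Mathlib

/-- One-line notation of a permutation of `Fin n`. -/
def oneLine {n : ℕ} (σ : Equiv.Perm (Fin n)) : List (Fin n) := List.ofFn σ

/-- Length of a longest common subsequence of the one-line notations of `σ` and `τ`. -/
noncomputable def lcsLen {n : ℕ} (σ τ : Equiv.Perm (Fin n)) : ℕ :=
  sSup {m | ∃ w : List (Fin n), w.length = m ∧ w.Sublist (oneLine σ) ∧ w.Sublist (oneLine τ)}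

/-- The Ulam distance: `d_U(σ,τ) = n - L(σ,τ)`. -/
noncomputable def ulamDist {n : ℕ} (σ τ : Equiv.Perm (Fin n)) : ℕ :=
  n - lcsLen σ τ

/-!
Let `k = n - d + 1`. If two codewords list the symbols `x < k` in the same order, that list
is a common subsequence of length `min n k`, so their Ulam distance is at most
`n - min n k < d`. Hence the restriction to the small symbols is injective on the code, and it
takes values among the `(min n k)!` orderings of those symbols.
-/

open List

section

variable {n : ℕ}

theorem oneLine_perm_finRange (σ : Equiv.Perm (Fin n)) : oneLine σ ~ finRange n := by
  rw [oneLine, ofFn_eq_map]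
  exact σ.map_finRange_perm

theorem length_filter_finRange_val_lt (k : ℕ) :
    ((finRange n).filter fun x : Fin n => decide ((x : ℕ) < k)).length = min n k := by
  rw [← Fin.card_filter_val_lt, ← toFinset_card_of_nodup ((nodup_finRange n).filter _),
    toFinset_filter, toFinset_finRange]
  simp only [decide_eq_true_eq]

theorem filter_coe_eq_map_filter (l : List (Fin n)) (q : ℕ → Bool) :
    (l : List ℕ).filter q = (l.filter fun a : Fin n => q a).map Fin.val :=
  (congrArg (filter q) map_eq_flatMap.symm).trans filter_map

theorem length_le_lcsLen {σ τ : Equiv.Perm (Fin n)} {w : List (Fin n)}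
    (hσ : w <+ oneLine σ) (hτ : w <+ oneLine τ) : w.length ≤ lcsLen σ τ := by
  refine le_csSup ⟨n, ?_⟩ ⟨w, rfl, hσ, hτ⟩
  rintro m ⟨v, rfl, hvσ, -⟩
  simpa [oneLine] using hvσ.length_le

theorem ulamDist_le_of_filter_eq (p : Fin n → Bool) {σ τ : Equiv.Perm (Fin n)}
    (h : (oneLine σ).filter p = (oneLine τ).filter p) :
    ulamDist σ τ ≤ n - ((finRange n).filter p).length := by
  have hcommon :=
    length_le_lcsLen (filter_sublist (l := oneLine σ)) (h ▸ filter_sublist (l := oneLine τ))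
  rw [((oneLine_perm_finRange σ).filter p).length_eq] at hcommon
  exact Nat.sub_le_sub_left hcommon n

theorem card_le_factorial_of_injOn_filter (p : Fin n → Bool) {C : Finset (Equiv.Perm (Fin n))}
    (h : Set.InjOn (fun σ => (oneLine σ).filter p) C) :
    C.card ≤ ((finRange n).filter p).length.factorial := by
  set L := (finRange n).filter p
  have hmaps : ∀ σ ∈ C, (oneLine σ).filter p ∈ L.permutations.toFinset := fun σ _ => by
    simpa only [mem_toFinset, mem_permutations] using (oneLine_perm_finRange σ).filter p
  calc C.card ≤ L.permutations.toFinset.card := Finset.card_le_card_of_injOn _ hmaps h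
    _ ≤ L.permutations.length := toFinset_card_le _
    _ = L.length.factorial := length_permutations L

end

theorem small_symbols_injective_general {n d : ℕ} (hd1 : 1 ≤ d)
    (C : Finset (Equiv.Perm (Fin n)))
    (hC : ∀ σ ∈ C, ∀ τ ∈ C, σ ≠ τ → d ≤ ulamDist σ τ) :
    Set.InjOn (fun σ : Equiv.Perm (Fin n) =>
        (oneLine σ).filter (fun x => decide ((x : ℕ) < n - d + 1))) (C : Set (Equiv.Perm (Fin n)))
      ∧ C.card ≤ (n - d + 1).factorial := by
  set p : Fin n → Bool := fun x => decide ((x : ℕ) < n - d + 1)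
  have hsmall : ((finRange n).filter p).length = min n (n - d + 1) :=
    length_filter_finRange_val_lt _
  have hinj : Set.InjOn (fun σ => (oneLine σ).filter p) C := by
    intro σ hσ τ hτ hfilter
    by_contra hne
    have hfar := hC σ hσ τ hτ hne
    have hnear := ulamDist_le_of_filter_eq p hfilter
    omega
  -- The statement filters the one-line notation coerced to `List ℕ`.
  simp only [filter_coe_eq_map_filter]
  refine ⟨(map_injective_iff.2 Fin.val_injective).comp_injOn hinj,
    (card_le_factorial_of_injOn_filter p hinj).trans ?_⟩
  exact hsmall ▸ Nat.factorial_le (min_le_right _ _)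

/-- The map sending a codeword to the subsequence of its one-line notation formed
by the `n - d + 1` smallest symbols (in order of appearance) is injective on a
code of minimum Ulam distance `d`; consequently `|C| ≤ (n - d + 1)!`. -/
theorem small_symbols_injective {n d : ℕ} (hd1 : 1 ≤ d) (hdn : d ≤ n)
    (C : Finset (Equiv.Perm (Fin n)))
    (hC : ∀ σ ∈ C, ∀ τ ∈ C, σ ≠ τ → d ≤ ulamDist σ τ) :
    Set.InjOn (fun σ : Equiv.Perm (Fin n) =>
        (oneLine σ).filter (fun x => decide ((x : ℕ) < n - d + 1))) (C : Set (Equiv.Perm (Fin n)))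
      ∧ C.card ≤ (n - d + 1).factorial :=
  small_symbols_injective_general hd1 C hC
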